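/- Let H be an orthogonally affine fibred functor on finite-dimensional unital C*-algebras such that H_A(ω) ≥ 0 for every state ω on every finite-dimensional C*-algebra A, with H_A(ω) = 0 whenever ω is pure. Then H_f(ω) ≥ 0 for every unital *-homomorphism f : B → A between commutative finite-dimensional C*-algebras and every state ω on A. -/

import Mathlib

open scoped ComplexOrder

section CStarDefs
variable {A : Type*} [Ring A] [StarRing A] [Algebra ℂ A]

/-- A state: a positive unital linear functional (positivity encoded via the order on `ℂ`). -/
def IsState (ω : A →ₗ[ℂ] ℂ) : Prop :=
  ω 1 = 1 ∧ ∀ a : A, 0 ≤ ω (star a * a)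

/-- A projection in a `*`-algebra. -/
def IsProjection (p : A) : Prop := star p * p = p

/-- The C*-algebraic order: `a ≤ b` iff `b - a` is positive, i.e. of the form `star x * x`. -/
def CStarLe (a b : A) : Prop := ∃ x : A, b - a = star x * x

/-- `P` is the support of `ω`: the smallest projection with
`ω (P * a) = ω (a * P) = ω a` for all `a`. -/
def IsSupportOf (ω : A →ₗ[ℂ] ℂ) (P : A) : Prop :=
  IsProjection P ∧ (∀ a : A, ω (P * a) = ω a ∧ ω (a * P) = ω a) ∧
    ∀ Q : A, IsProjection Q → (∀ a : A, ω (Q * a) = ω a ∧ ω (a * Q) = ω a) → CStarLe P Q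

/-- Two states are mutually orthogonal iff their supports multiply to zero. -/
def MutuallyOrthogonal (ω ξ : A →ₗ[ℂ] ℂ) : Prop :=
  ∃ P Q : A, IsSupportOf ω P ∧ IsSupportOf ξ Q ∧ P * Q = 0

/-- A pure state: a state that cannot be written as a nontrivial convex combination of two
distinct states. -/
def IsPureState (ω : A →ₗ[ℂ] ℂ) : Prop :=
  IsState ω ∧ ∀ (l : ℝ) (ω₁ ω₂ : A →ₗ[ℂ] ℂ), 0 < l → l < 1 →
    IsState ω₁ → IsState ω₂ → ω = (l : ℂ) • ω₁ + ((1 - l : ℝ) : ℂ) • ω₂ → ω₁ = ω₂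

end CStarDefs

/-- The unique unital `*`-homomorphism `ℂ → A`, `z ↦ z • 1`. -/
noncomputable def unitalHom (A : Type*) [Semiring A] [StarMul A] [Algebra ℂ A]
    [StarModule ℂ A] : ℂ →⋆ₐ[ℂ] A :=
  { Algebra.ofId ℂ A with
    map_star' := fun z => by
      simpa [Algebra.ofId] using algebraMap_star_comm (R := ℂ) (A := A) z }

/-- A fibred functor on finite-dimensional unital C*-algebras: an assignment of a real
number `H A B f ω` to every unital `*`-homomorphism `f : B →⋆ₐ[ℂ] A` of finite-dimensional
unital C*-algebras and every functional `ω` on `A`, which is functorial on states: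
`H_id (ω) = 0` and `H_{f∘g}(ω) = H_f(ω) + H_g(ω ∘ f)`. -/
structure EntropyFunctor : Type 1 where
  H : ∀ (A : Type) [NormedRing A] [StarRing A] [CStarRing A] [NormedAlgebra ℂ A]
        [StarModule ℂ A] [FiniteDimensional ℂ A]
      (B : Type) [NormedRing B] [StarRing B] [CStarRing B] [NormedAlgebra ℂ B]
        [StarModule ℂ B] [FiniteDimensional ℂ B],
      (B →⋆ₐ[ℂ] A) → (A →ₗ[ℂ] ℂ) → ℝ
  H_id : ∀ (A : Type) [NormedRing A] [StarRing A] [CStarRing A] [NormedAlgebra ℂ A]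
        [StarModule ℂ A] [FiniteDimensional ℂ A] (ω : A →ₗ[ℂ] ℂ), IsState ω →
      H A A (StarAlgHom.id ℂ A) ω = 0
  H_comp : ∀ (A : Type) [NormedRing A] [StarRing A] [CStarRing A] [NormedAlgebra ℂ A]
        [StarModule ℂ A] [FiniteDimensional ℂ A]
      (B : Type) [NormedRing B] [StarRing B] [CStarRing B] [NormedAlgebra ℂ B]
        [StarModule ℂ B] [FiniteDimensional ℂ B]
      (C : Type) [NormedRing C] [StarRing C] [CStarRing C] [NormedAlgebra ℂ C]
        [StarModule ℂ C] [FiniteDimensional ℂ C]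
      (f : B →⋆ₐ[ℂ] A) (g : C →⋆ₐ[ℂ] B) (ω : A →ₗ[ℂ] ℂ), IsState ω →
      H A C (f.comp g) ω = H A B f ω + H B C g (ω.comp f.toAlgHom.toLinearMap)

/-- `H` is orthogonally affine: it is affine on convex combinations of mutually orthogonal
states whose orthogonality is preserved by `f`. -/
def EntropyFunctor.OrthAffine (E : EntropyFunctor) : Prop :=
  ∀ (A : Type) [NormedRing A] [StarRing A] [CStarRing A] [NormedAlgebra ℂ A]
      [StarModule ℂ A] [FiniteDimensional ℂ A]
    (B : Type) [NormedRing B] [StarRing B] [CStarRing B] [NormedAlgebra ℂ B]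
      [StarModule ℂ B] [FiniteDimensional ℂ B]
    (f : B →⋆ₐ[ℂ] A) (ω ξ : A →ₗ[ℂ] ℂ), IsState ω → IsState ξ →
    MutuallyOrthogonal ω ξ →
    MutuallyOrthogonal (ω.comp f.toAlgHom.toLinearMap) (ξ.comp f.toAlgHom.toLinearMap) →
    ∀ l : ℝ, 0 ≤ l → l ≤ 1 →
      E.H A B f ((l : ℂ) • ω + ((1 - l : ℝ) : ℂ) • ξ)
        = l * E.H A B f ω + (1 - l) * E.H A B f ξ

/-- `H` is continuous: for each fixed `f`, `ω ↦ H_f(ω)` is continuous on the state space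
(w.r.t. pointwise convergence of states). -/
def EntropyFunctor.ContinuousOnStates (E : EntropyFunctor) : Prop :=
  ∀ (A : Type) [NormedRing A] [StarRing A] [CStarRing A] [NormedAlgebra ℂ A]
      [StarModule ℂ A] [FiniteDimensional ℂ A]
    (B : Type) [NormedRing B] [StarRing B] [CStarRing B] [NormedAlgebra ℂ B]
      [StarModule ℂ B] [FiniteDimensional ℂ B]
    (f : B →⋆ₐ[ℂ] A) (ωseq : ℕ → (A →ₗ[ℂ] ℂ)) (ω : A →ₗ[ℂ] ℂ),
    (∀ k, IsState (ωseq k)) → IsState ω →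
    (∀ a, Filter.Tendsto (fun k => ωseq k a) Filter.atTop (nhds (ω a))) →
    Filter.Tendsto (fun k => E.H A B f (ωseq k)) Filter.atTop (nhds (E.H A B f ω))

/-- `H_A(ω) ≥ 0` for all states `ω`, with equality on pure states, on every
finite-dimensional unital C*-algebra `A`. -/
def EntropyFunctor.NonnegVanishingOnPure (E : EntropyFunctor) : Prop :=
  ∀ (A : Type) [NormedRing A] [StarRing A] [CStarRing A] [NormedAlgebra ℂ A]
      [StarModule ℂ A] [FiniteDimensional ℂ A] (ω : A →ₗ[ℂ] ℂ), IsState ω →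
    0 ≤ E.H A ℂ (unitalHom A) ω ∧ (IsPureState ω → E.H A ℂ (unitalHom A) ω = 0)

/-
Through the unit maps `ℂ → B → A`, functoriality gives `H_f(ω) = H_A(ω) - H_B(ω ∘ f)`, so
`H_f(ω) ≥ 0` as soon as `ω ∘ f` is pure. By Gelfand duality `A ≅ ℂ^X` and `B ≅ ℂ^Y`; let `p_y` be
the minimal projections of `B`. If `ω ∘ f` is not pure, pick `y₀` with `0 < ω(f p_y₀) < 1` and
write `ω = l ω₁ + (1 - l) ω₂` with `ω₁, ω₂` the compressions `ω(P ·) / ω(P)` of `ω` by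
`P = f p_y₀` and by `1 - P`. In a commutative algebra these are states, orthogonal through `P`,
and their pullbacks are the compressions of `ω ∘ f` by `p_y₀` and `1 - p_y₀`, again orthogonal.
Orthogonal affinity gives `H_f(ω) = l H_f(ω₁) + (1 - l) H_f(ω₂)`: here `ω₁ ∘ f` is pure, while
`ω₂ ∘ f` charges fewer minimal projections than `ω ∘ f`, so induction on that set concludes.
-/

noncomputable section

section Projection

variable {A : Type*} [Ring A] [StarRing A]

theorem IsProjection.eq {P : A} (hP : IsProjection P) : star P * P = P := hP

theorem IsProjection.star_eq {P : A} (hP : IsProjection P) : star P = P :=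
  calc star P = star (star P * P) := by rw [hP.eq]
    _ = star P * P := by rw [star_mul, star_star]
    _ = P := hP

theorem IsProjection.mul_self {P : A} (hP : IsProjection P) : P * P = P := by
  simpa only [hP.star_eq] using hP.eq

theorem IsProjection.one_sub {P : A} (hP : IsProjection P) : IsProjection (1 - P) := by
  rw [IsProjection, star_sub, star_one, hP.star_eq, sub_mul, mul_sub, mul_sub, hP.mul_self]
  noncomm_ring

end Projection

section Functionals

variable {A B : Type*} [Ring A] [StarRing A] [Algebra ℂ A] [Ring B] [StarRing B] [Algebra ℂ B]

def StarAlgHom.pullback (f : B →⋆ₐ[ℂ] A) (ω : A →ₗ[ℂ] ℂ) : B →ₗ[ℂ] ℂ :=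
  ω.comp f.toAlgHom.toLinearMap

@[simp]
theorem StarAlgHom.pullback_apply (f : B →⋆ₐ[ℂ] A) (ω : A →ₗ[ℂ] ℂ) (b : B) :
    f.pullback ω b = ω (f b) := rfl

theorem StarAlgEquiv.pullback_pullback_symm (e : A ≃⋆ₐ[ℂ] B) (ω : A →ₗ[ℂ] ℂ) :
    e.toStarAlgHom.pullback (e.symm.toStarAlgHom.pullback ω) = ω :=
  LinearMap.ext fun a => by simp

theorem IsState.pullback {ω : A →ₗ[ℂ] ℂ} (hω : IsState ω) (f : B →⋆ₐ[ℂ] A) :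
    IsState (f.pullback ω) :=
  ⟨by simp [hω.1], fun b => by simpa [map_star] using hω.2 (f b)⟩

theorem IsProjection.map {P : A} (hP : IsProjection P) (f : A →⋆ₐ[ℂ] B) :
    IsProjection (f P) := by
  rw [IsProjection, ← map_star, ← map_mul, hP.eq]

theorem IsState.apply_nonneg_of_isProjection {ω : A →ₗ[ℂ] ℂ} (hω : IsState ω) {P : A}
    (hP : IsProjection P) : 0 ≤ ω P := by
  simpa only [hP.eq] using hω.2 P

theorem IsSupportOf.pullback_equiv {ω : B →ₗ[ℂ] ℂ} {P : B} (h : IsSupportOf ω P)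
    (e : A ≃⋆ₐ[ℂ] B) : IsSupportOf (e.toStarAlgHom.pullback ω) (e.symm P) := by
  obtain ⟨hP, hunit, hmin⟩ := h
  refine ⟨hP.map e.symm.toStarAlgHom, fun a => ?_, fun Q hQ hQunit => ?_⟩
  · simpa using hunit (e a)
  · have hQunit' : ∀ b, ω (e Q * b) = ω b ∧ ω (b * e Q) = ω b := fun b => by
      simpa using hQunit (e.symm b)
    obtain ⟨x, hx⟩ := hmin (e Q) (hQ.map e.toStarAlgHom) hQunit'
    refine ⟨e.symm x, ?_⟩
    simpa [map_star] using congrArg e.symm hx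

theorem MutuallyOrthogonal.pullback_equiv {ω ξ : B →ₗ[ℂ] ℂ} (h : MutuallyOrthogonal ω ξ)
    (e : A ≃⋆ₐ[ℂ] B) :
    MutuallyOrthogonal (e.toStarAlgHom.pullback ω) (e.toStarAlgHom.pullback ξ) := by
  obtain ⟨P, Q, hP, hQ, hPQ⟩ := h
  exact ⟨e.symm P, e.symm Q, hP.pullback_equiv e, hQ.pullback_equiv e, by
    rw [← map_mul, hPQ, map_zero]⟩

theorem IsPureState.pullback_equiv {ω : B →ₗ[ℂ] ℂ} (h : IsPureState ω) (e : A ≃⋆ₐ[ℂ] B) :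
    IsPureState (e.toStarAlgHom.pullback ω) := by
  refine ⟨h.1.pullback _, fun l ω₁ ω₂ hl0 hl1 hω₁ hω₂ hsplit => ?_⟩
  have hsplit' : ω = (l : ℂ) • e.symm.toStarAlgHom.pullback ω₁
      + ((1 - l : ℝ) : ℂ) • e.symm.toStarAlgHom.pullback ω₂ := by
    rw [← e.symm.pullback_pullback_symm ω, StarAlgEquiv.symm_symm, hsplit]
    rfl
  have h₁₂ := h.2 l _ _ hl0 hl1 (hω₁.pullback _) (hω₂.pullback _) hsplit'
  rw [← e.pullback_pullback_symm ω₁, ← e.pullback_pullback_symm ω₂, h₁₂]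

end Functionals

theorem isState_proj {X : Type*} (x₀ : X) :
    IsState (LinearMap.proj x₀ : (X → ℂ) →ₗ[ℂ] ℂ) :=
  ⟨rfl, fun a => star_mul_self_nonneg (a x₀)⟩

section Pi

variable {X : Type*} [DecidableEq X]

theorem Pi.single_eq_smul_single_one (x : X) (a : ℂ) :
    Pi.single x a = a • (Pi.single x 1 : X → ℂ) := by
  rw [← Pi.single_smul', smul_eq_mul, mul_one]

theorem LinearMap.apply_mul_single (F : (X → ℂ) →ₗ[ℂ] ℂ) (v : X → ℂ) (x : X) :
    F (v * Pi.single x 1) = v x * F (Pi.single x 1) := by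
  rw [← Pi.single_mul_right, mul_one, Pi.single_eq_smul_single_one, map_smul, smul_eq_mul]

theorem IsState.apply_single_nonneg {ω : (X → ℂ) →ₗ[ℂ] ℂ} (hω : IsState ω) (x : X) :
    0 ≤ ω (Pi.single x 1) := by
  simpa [← Pi.single_mul] using hω.2 (Pi.single x 1)

variable [Fintype X]

theorem LinearMap.apply_eq_sum_mul_single (F : (X → ℂ) →ₗ[ℂ] ℂ) (a : X → ℂ) :
    F a = ∑ x, a x * F (Pi.single x 1) := by
  conv_lhs => rw [← Finset.univ_sum_single a]
  simp_rw [map_sum, Pi.single_eq_smul_single_one _ (a _), map_smul, smul_eq_mul]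

theorem IsState.sum_apply_single {ω : (X → ℂ) →ₗ[ℂ] ℂ} (hω : IsState ω) :
    ∑ x, ω (Pi.single x 1) = 1 := by
  rw [← map_sum, show ∑ x, Pi.single x (1 : ℂ) = 1 from Finset.univ_sum_single 1, hω.1]

theorem IsState.apply_single_eq_one_iff {ω : (X → ℂ) →ₗ[ℂ] ℂ} (hω : IsState ω) (x₀ : X) :
    ω (Pi.single x₀ 1) = 1 ↔ ∀ x ≠ x₀, ω (Pi.single x 1) = 0 := by
  have hsum := hω.sum_apply_single
  rw [← Finset.add_sum_erase _ _ (Finset.mem_univ x₀)] at hsum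
  have hrest : ∑ x ∈ Finset.univ.erase x₀, ω (Pi.single x 1) = 0 ↔
      ∀ x ≠ x₀, ω (Pi.single x 1) = 0 := by
    rw [Finset.sum_eq_zero_iff_of_nonneg fun x _ => hω.apply_single_nonneg x]
    simp
  rw [← hrest]
  constructor
  · intro h
    rwa [h, add_eq_left] at hsum
  · intro h
    rwa [h, add_zero] at hsum

theorem IsState.eq_proj_of_apply_single_eq_one {ω : (X → ℂ) →ₗ[ℂ] ℂ} (hω : IsState ω)
    {x₀ : X} (h : ω (Pi.single x₀ 1) = 1) : ω = LinearMap.proj x₀ := by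
  refine (Pi.basisFun ℂ X).ext fun x => ?_
  rw [Pi.basisFun_apply, LinearMap.proj_apply]
  by_cases hx : x = x₀
  · subst hx
    simpa using h
  · simp [(hω.apply_single_eq_one_iff x₀).1 h x hx, hx]

theorem isPureState_proj (x₀ : X) : IsPureState (LinearMap.proj x₀ : (X → ℂ) →ₗ[ℂ] ℂ) := by
  refine ⟨isState_proj x₀, fun l ω₁ ω₂ hl0 hl1 hω₁ hω₂ hsplit => ?_⟩
  have hvanish : ∀ x ≠ x₀, ω₁ (Pi.single x 1) = 0 ∧ ω₂ (Pi.single x 1) = 0 := by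
    intro x hx
    have hsum :
        (l : ℂ) * ω₁ (Pi.single x 1) + ((1 - l : ℝ) : ℂ) * ω₂ (Pi.single x 1) = 0 := by
      simpa [Pi.single_apply, hx] using (congrArg (· (Pi.single x 1)) hsplit).symm
    have hl : (0 : ℂ) < l := by exact_mod_cast hl0
    have hl' : (0 : ℂ) < ((1 - l : ℝ) : ℂ) := by exact_mod_cast sub_pos.2 hl1
    rw [add_eq_zero_iff_of_nonneg (mul_nonneg hl.le (hω₁.apply_single_nonneg x))
      (mul_nonneg hl'.le (hω₂.apply_single_nonneg x))] at hsum
    exact ⟨(mul_eq_zero.1 hsum.1).resolve_left hl.ne',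
      (mul_eq_zero.1 hsum.2).resolve_left hl'.ne'⟩
  rw [hω₁.eq_proj_of_apply_single_eq_one
      ((hω₁.apply_single_eq_one_iff x₀).2 fun x hx => (hvanish x hx).1),
    hω₂.eq_proj_of_apply_single_eq_one
      ((hω₂.apply_single_eq_one_iff x₀).2 fun x hx => (hvanish x hx).2)]

end Pi

theorem IsProjection.apply_eq_zero_or_one {X : Type*} {Q : X → ℂ} (hQ : IsProjection Q)
    (x : X) :
    Q x = 0 ∨ Q x = 1 :=
  IsIdempotentElem.iff_eq_zero_or_one.1 (congrFun hQ.mul_self x)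

section PiSupport

variable {X : Type*} [Fintype X] [DecidableEq X]

def piSupport (ω : (X → ℂ) →ₗ[ℂ] ℂ) : X → ℂ :=
  fun x => if ω (Pi.single x 1) = 0 then 0 else 1

theorem isSupportOf_piSupport (ω : (X → ℂ) →ₗ[ℂ] ℂ) : IsSupportOf ω (piSupport ω) := by
  have hsupp : ∀ x, piSupport ω x * ω (Pi.single x 1) = ω (Pi.single x 1) := fun x => by
    unfold piSupport
    split_ifs with h <;> simp [h]
  have hunit : ∀ a, ω (piSupport ω * a) = ω a := fun a => by
    rw [ω.apply_eq_sum_mul_single, ω.apply_eq_sum_mul_single a]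
    refine Finset.sum_congr rfl fun x _ => ?_
    rw [Pi.mul_apply, mul_comm (piSupport ω x), mul_assoc, hsupp]
  refine ⟨funext fun x => ?_, fun a => ⟨hunit a, by rw [mul_comm, hunit]⟩,
    fun Q hQ hQunit => ⟨Q - piSupport ω, funext fun x => ?_⟩⟩
  · simp only [Pi.mul_apply, Pi.star_apply, piSupport]
    split_ifs <;> simp
  · have hQ1 : ω (Pi.single x 1) ≠ 0 → Q x = 1 := fun hx => by
      have h := (hQunit (Pi.single x 1)).1
      rw [ω.apply_mul_single] at h
      exact ((mul_eq_right₀ hx).1 h)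
    simp only [Pi.sub_apply, Pi.mul_apply, Pi.star_apply, piSupport]
    split_ifs with h
    · simpa using (congrFun hQ.eq x).symm
    · simp [hQ1 h]

theorem mutuallyOrthogonal_of_isProjection_pi {ω ξ : (X → ℂ) →ₗ[ℂ] ℂ} {P : X → ℂ}
    (hP : IsProjection P) (hωP : ∀ a, ω (P * a) = ω a) (hξP : ∀ a, ξ (P * a) = 0) :
    MutuallyOrthogonal ω ξ := by
  refine ⟨_, _, isSupportOf_piSupport ω, isSupportOf_piSupport ξ, funext fun x => ?_⟩
  have hω := hωP (Pi.single x 1)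
  have hξ := hξP (Pi.single x 1)
  rw [ω.apply_mul_single] at hω
  rw [ξ.apply_mul_single] at hξ
  simp only [Pi.mul_apply, Pi.zero_apply, piSupport]
  rcases hP.apply_eq_zero_or_one x with h | h
  · rw [h, zero_mul] at hω
    simp [← hω]
  · rw [h, one_mul] at hξ
    simp [hξ]

end PiSupport

section Model

variable {A : Type*} [Ring A] [StarRing A] [Algebra ℂ A] {X : Type*}

theorem mutuallyOrthogonal_of_isProjection [Fintype X] (e : A ≃⋆ₐ[ℂ] (X → ℂ))
    {ω ξ : A →ₗ[ℂ] ℂ} {P : A} (hP : IsProjection P) (hωP : ∀ a, ω (P * a) = ω a)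
    (hξP : ∀ a, ξ (P * a) = 0) :
    MutuallyOrthogonal ω ξ := by
  classical
  have h := mutuallyOrthogonal_of_isProjection_pi (ω := e.symm.toStarAlgHom.pullback ω)
    (ξ := e.symm.toStarAlgHom.pullback ξ) (hP.map e.toStarAlgHom)
    (fun a => by simpa using hωP (e.symm a)) (fun a => by simpa using hξP (e.symm a))
  simpa only [StarAlgEquiv.pullback_pullback_symm] using h.pullback_equiv e

theorem isProjection_symm_single [DecidableEq X] (e : A ≃⋆ₐ[ℂ] (X → ℂ)) (x : X) :
    IsProjection (e.symm (Pi.single x 1)) := by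
  refine IsProjection.map ?_ e.symm.toStarAlgHom
  rw [IsProjection, ← Pi.single_star, ← Pi.single_mul, star_one, mul_one]

theorem isPureState_of_apply_eq_one [Fintype X] [DecidableEq X] (e : A ≃⋆ₐ[ℂ] (X → ℂ))
    {ν : A →ₗ[ℂ] ℂ} (hν : IsState ν) {x₀ : X} (h : ν (e.symm (Pi.single x₀ 1)) = 1) :
    IsPureState ν := by
  have hproj := (hν.pullback e.symm.toStarAlgHom).eq_proj_of_apply_single_eq_one h
  rw [← e.pullback_pullback_symm ν, hproj]
  exact (isPureState_proj x₀).pullback_equiv e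

end Model

section Compress

variable {A B : Type*} [Ring A] [Algebra ℂ A] [Ring B] [Algebra ℂ B]

def compress (ω : A →ₗ[ℂ] ℂ) (P : A) : A →ₗ[ℂ] ℂ :=
  (ω P)⁻¹ • ω.comp (LinearMap.mulLeft ℂ P)

@[simp]
theorem compress_apply (ω : A →ₗ[ℂ] ℂ) (P a : A) : compress ω P a = (ω P)⁻¹ * ω (P * a) := rfl

theorem compress_add_compress_one_sub (ω : A →ₗ[ℂ] ℂ) {P : A} (h₁ : ω P ≠ 0)
    (h₂ : ω (1 - P) ≠ 0) : ω P • compress ω P + ω (1 - P) • compress ω (1 - P) = ω :=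
  LinearMap.ext fun a => by
    rw [LinearMap.add_apply, LinearMap.smul_apply, LinearMap.smul_apply, compress_apply,
      compress_apply, smul_eq_mul, smul_eq_mul, mul_inv_cancel_left₀ h₁, mul_inv_cancel_left₀ h₂,
      sub_mul, one_mul, map_sub, add_sub_cancel]

variable [StarRing A] [StarRing B]

theorem IsState.compress (hA : ∀ a b : A, a * b = b * a) {ω : A →ₗ[ℂ] ℂ} (hω : IsState ω)
    {P : A} (hP : IsProjection P) (hωP : ω P ≠ 0) : IsState (compress ω P) := by
  refine ⟨by simp [hωP], fun a => ?_⟩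
  have hsq : P * (star a * a) = star (a * P) * (a * P) :=
    calc P * (star a * a) = P * P * (star a * a) := by rw [hP.mul_self]
      _ = P * (star a * a) * P := by rw [mul_assoc, mul_assoc, hA P (star a * a)]
      _ = star (a * P) * (a * P) := by rw [star_mul, hP.star_eq]; noncomm_ring
  rw [compress_apply, hsq]
  exact mul_nonneg (inv_nonneg_of_nonneg (hω.apply_nonneg_of_isProjection hP)) (hω.2 _)

theorem StarAlgHom.pullback_compress (f : B →⋆ₐ[ℂ] A) (ω : A →ₗ[ℂ] ℂ) (Q : B) :
    f.pullback (compress ω (f Q)) = compress (f.pullback ω) Q :=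
  LinearMap.ext fun b => by simp

theorem mutuallyOrthogonal_compress {X : Type*} [Fintype X] (e : A ≃⋆ₐ[ℂ] (X → ℂ))
    (ω : A →ₗ[ℂ] ℂ) {P : A} (hP : IsProjection P) :
    MutuallyOrthogonal (compress ω P) (compress ω (1 - P)) :=
  mutuallyOrthogonal_of_isProjection e hP
    (fun a => by rw [compress_apply, compress_apply, ← mul_assoc, hP.mul_self])
    (fun a => by rw [compress_apply, ← mul_assoc, sub_mul, one_mul, hP.mul_self, sub_self,
      zero_mul, map_zero, mul_zero])

end Compress

def ContinuousMap.starAlgEquivFnOfDiscrete (X : Type*) [TopologicalSpace X]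
    [DiscreteTopology X] : C(X, ℂ) ≃⋆ₐ[ℂ] (X → ℂ) :=
  { ContinuousMap.equivFnOfDiscrete with
    map_add' _ _ := rfl
    map_mul' _ _ := rfl
    map_star' _ := rfl
    map_smul' _ _ := rfl }

universe u in
theorem exists_starAlgEquiv_pi (A : Type u) [NormedRing A] [StarRing A] [CStarRing A]
    [NormedAlgebra ℂ A] [StarModule ℂ A] [FiniteDimensional ℂ A]
    (hA : ∀ a b : A, a * b = b * a) :
    ∃ (X : Type u) (_ : Fintype X), Nonempty (A ≃⋆ₐ[ℂ] (X → ℂ)) := by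
  let _ : CompleteSpace A := FiniteDimensional.complete ℂ A
  let _ : CommCStarAlgebra A := { mul_comm := hA }
  have : Finite (WeakDual.characterSpace ℂ A) :=
    .of_equiv _ WeakDual.CharacterSpace.equivAlgHom.symm
  exact ⟨_, .ofFinite _,
    ⟨(gelfandStarTransform A).trans (ContinuousMap.starAlgEquivFnOfDiscrete _)⟩⟩

theorem mul_comm_of_starAlgEquiv_pi {A X : Type*} [Ring A] [StarRing A] [Algebra ℂ A]
    (e : A ≃⋆ₐ[ℂ] (X → ℂ)) (a b : A) : a * b = b * a :=
  e.injective (by rw [map_mul, map_mul, mul_comm])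

theorem StarAlgHom.comp_unitalHom {A B : Type*} [Semiring A] [StarMul A] [Algebra ℂ A]
    [StarModule ℂ A] [Semiring B] [StarMul B] [Algebra ℂ B] [StarModule ℂ B]
    (f : B →⋆ₐ[ℂ] A) : f.comp (unitalHom B) = unitalHom A :=
  StarAlgHom.ext fun z => f.toAlgHom.commutes z

namespace EntropyFunctor

variable (E : EntropyFunctor)
  {A : Type} [NormedRing A] [StarRing A] [CStarRing A] [NormedAlgebra ℂ A] [StarModule ℂ A]
    [FiniteDimensional ℂ A]
  {B : Type} [NormedRing B] [StarRing B] [CStarRing B] [NormedAlgebra ℂ B] [StarModule ℂ B]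
    [FiniteDimensional ℂ B]

theorem H_eq_sub (f : B →⋆ₐ[ℂ] A) {ω : A →ₗ[ℂ] ℂ} (hω : IsState ω) :
    E.H A B f ω = E.H A ℂ (unitalHom A) ω - E.H B ℂ (unitalHom B) (f.pullback ω) := by
  have h := E.H_comp A B ℂ f (unitalHom B) ω hω
  rw [f.comp_unitalHom] at h
  rw [h, StarAlgHom.pullback, add_sub_cancel_right]

theorem H_nonneg_of_isPureState_pullback (hpos : E.NonnegVanishingOnPure) (f : B →⋆ₐ[ℂ] A)
    {ω : A →ₗ[ℂ] ℂ} (hω : IsState ω) (hpure : IsPureState (f.pullback ω)) :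
    0 ≤ E.H A B f ω := by
  rw [E.H_eq_sub f hω, (hpos B _ (hω.pullback f)).2 hpure, sub_zero]
  exact (hpos A ω hω).1

variable {X Y : Type} [Fintype X] [Fintype Y] [DecidableEq Y]

theorem H_nonneg_of_compress (haff : E.OrthAffine) (hpos : E.NonnegVanishingOnPure)
    (eA : A ≃⋆ₐ[ℂ] (X → ℂ)) (eB : B ≃⋆ₐ[ℂ] (Y → ℂ)) (f : B →⋆ₐ[ℂ] A) {ω : A →ₗ[ℂ] ℂ}
    (hω : IsState ω) {y₀ : Y} (h₀ : ω (f (eB.symm (Pi.single y₀ 1))) ≠ 0)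
    (h₁ : ω (f (eB.symm (Pi.single y₀ 1))) ≠ 1)
    (hrest : 0 ≤ E.H A B f (compress ω (1 - f (eB.symm (Pi.single y₀ 1))))) :
    0 ≤ E.H A B f ω := by
  set Q := eB.symm (Pi.single y₀ 1)
  have hQ : IsProjection Q := isProjection_symm_single eB y₀
  have hP := hQ.map f
  have hA := mul_comm_of_starAlgEquiv_pi eA
  set l := (ω (f Q)).re
  have hl : ω (f Q) = l := Complex.eq_re_of_ofReal_le (hω.apply_nonneg_of_isProjection hP)
  have hl' : ω (1 - f Q) = ((1 - l : ℝ) : ℂ) := by rw [map_sub, hω.1, hl]; push_cast; ring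
  have h₁' : ω (1 - f Q) ≠ 0 := by rwa [map_sub, hω.1, sub_ne_zero, ne_comm]
  have hω₁ := hω.compress hA hP h₀
  have hω₂ := hω.compress hA hP.one_sub h₁'
  have hl0 : 0 ≤ l := by exact_mod_cast hl ▸ hω.apply_nonneg_of_isProjection hP
  have hl1 : l ≤ 1 := by
    have := hl' ▸ hω.apply_nonneg_of_isProjection hP.one_sub
    linarith [Complex.zero_le_real.1 this]
  have horthB : MutuallyOrthogonal (f.pullback (compress ω (f Q)))
      (f.pullback (compress ω (1 - f Q))) := by
    rw [← map_one f, ← map_sub, f.pullback_compress, f.pullback_compress]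
    exact mutuallyOrthogonal_compress eB _ hQ
  have hpure : IsPureState (f.pullback (compress ω (f Q))) := by
    refine isPureState_of_apply_eq_one eB (hω₁.pullback f) (x₀ := y₀) ?_
    rw [f.pullback_compress, compress_apply, f.pullback_apply, f.pullback_apply, hQ.mul_self,
      inv_mul_cancel₀ h₀]
  have haffine := haff A B f _ _ hω₁ hω₂ (mutuallyOrthogonal_compress eA ω hP) horthB l hl0 hl1
  rw [← hl, ← hl', compress_add_compress_one_sub ω h₀ h₁'] at haffine
  rw [haffine]
  exact add_nonneg (mul_nonneg hl0 (E.H_nonneg_of_isPureState_pullback hpos f hω₁ hpure))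
    (mul_nonneg (sub_nonneg.2 hl1) hrest)

theorem H_nonneg_of_forall_notMem (haff : E.OrthAffine) (hpos : E.NonnegVanishingOnPure)
    (eA : A ≃⋆ₐ[ℂ] (X → ℂ)) (eB : B ≃⋆ₐ[ℂ] (Y → ℂ)) (f : B →⋆ₐ[ℂ] A) (s : Finset Y) :
    ∀ ω : A →ₗ[ℂ] ℂ, IsState ω → (∀ y ∉ s, ω (f (eB.symm (Pi.single y 1))) = 0) →
      0 ≤ E.H A B f ω := by
  induction s using Finset.induction_on with
  | empty =>
    intro ω hω hvanish
    have hsum : ∑ y, ω (f (eB.symm (Pi.single y 1))) = 1 :=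
      (hω.pullback (f.comp eB.symm.toStarAlgHom)).sum_apply_single
    simp [hvanish] at hsum
  | insert y₀ t _ ih =>
    intro ω hω hvanish
    set Q := eB.symm (Pi.single y₀ 1)
    by_cases h₀ : ω (f Q) = 0
    · refine ih ω hω fun y hy => ?_
      by_cases hy₀ : y = y₀
      · rwa [hy₀]
      · exact hvanish y (by simp [hy₀, hy])
    by_cases h₁ : ω (f Q) = 1
    · exact E.H_nonneg_of_isPureState_pullback hpos f hω
        (isPureState_of_apply_eq_one eB (hω.pullback f) h₁)
    refine E.H_nonneg_of_compress haff hpos eA eB f hω h₀ h₁ (ih _ ?_ fun y hy => ?_)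
    · have h₁' : ω (1 - f Q) ≠ 0 := by rwa [map_sub, hω.1, sub_ne_zero, ne_comm]
      exact hω.compress (mul_comm_of_starAlgEquiv_pi eA)
        ((isProjection_symm_single eB y₀).map f).one_sub h₁'
    · have hmul : ω ((1 - f Q) * f (eB.symm (Pi.single y 1)))
          = (1 - Pi.single y₀ 1 : Y → ℂ) y * ω (f (eB.symm (Pi.single y 1))) := by
        rw [show (1 - f Q) * f (eB.symm (Pi.single y 1))
            = f (eB.symm ((1 - Pi.single y₀ 1) * Pi.single y 1)) by
          rw [map_mul, map_mul, map_sub, map_sub, map_one, map_one]]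
        exact ((f.comp eB.symm.toStarAlgHom).pullback ω).apply_mul_single _ y
      rw [compress_apply, hmul]
      by_cases hy₀ : y = y₀
      · simp [hy₀]
      · simp [hvanish y (by simp [hy₀, hy])]

end EntropyFunctor

end

/-- If `H` is an orthogonally affine fibred functor with `H_A(ω) ≥ 0` on
all states and `H_A(ω) = 0` on pure states, then `H_f(ω) ≥ 0` for all unital
`*`-homomorphisms `f : B → A` between *commutative* finite-dimensional C*-algebras and all
states `ω` on `A`. -/
theorem entropyFunctor_nonneg_on_commutative (E : EntropyFunctor)
    (haff : E.OrthAffine)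
    (hpos : E.NonnegVanishingOnPure)
    (A : Type) [NormedRing A] [StarRing A] [CStarRing A] [NormedAlgebra ℂ A]
      [StarModule ℂ A] [FiniteDimensional ℂ A]
    (B : Type) [NormedRing B] [StarRing B] [CStarRing B] [NormedAlgebra ℂ B]
      [StarModule ℂ B] [FiniteDimensional ℂ B]
    (hAcomm : ∀ a b : A, a * b = b * a)
    (hBcomm : ∀ a b : B, a * b = b * a)
    (f : B →⋆ₐ[ℂ] A) (ω : A →ₗ[ℂ] ℂ) (hω : IsState ω) :
    0 ≤ E.H A B f ω := by
  classical
  obtain ⟨X, _, ⟨eA⟩⟩ := exists_starAlgEquiv_pi A hAcomm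
  obtain ⟨Y, _, ⟨eB⟩⟩ := exists_starAlgEquiv_pi B hBcomm
  exact E.H_nonneg_of_forall_notMem haff hpos eA eB f Finset.univ ω hω
    fun y hy => absurd (Finset.mem_univ y) hy
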